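/- arXiv:2202.07913 — 7 statements merged into one kernel-verified Lean document; each statement's English description precedes it below -/
import Mathlib

section
/- Let I ⊆ ℝ be an interval and let f : I → ℝ be continuous. Suppose that for every t ∈ I there exists a function F_t of a real variable s, defined and continuously differentiable on a neighborhood of t in I, such that F_t(t) = f(t) and F_t(s) ≥ f(s) for all s in that neighborhood. If the function t ↦ F_t'(t) (the derivative of F_t in s evaluated at s = t) is locally bounded on I, then f is locally Lipschitz on I. -/
open Set Filter Topology

/-! Where the upper support function `F t` touches `f` from above, the right difference quotients
of `f` at `t` are eventually below those of `F t`, and the left ones above, so the one-sided Dini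
derivatives of `f` at `t` are squeezed by `F' t t`. With `|F' t t| ≤ C` near a point, comparison
with lines of slope `±C` (the left-hand case after reflecting `x ↦ -x`) gives
`|f y - f x| ≤ C |y - x|` there. -/

theorem slope_comp_neg (f : ℝ → ℝ) (x z : ℝ) :
    slope (fun y => f (-y)) x z = -slope f (-x) (-z) := by
  rw [slope_def_field, slope_def_field, show -z - -x = -(z - x) by ring, div_neg, neg_neg]

theorem sub_le_mul_sub_of_frequently_slope_lt {f : ℝ → ℝ} {a b C : ℝ} (hab : a ≤ b)
    (hf : ContinuousOn f (Icc a b))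
    (hslope : ∀ x ∈ Ico a b, ∀ r, C < r → ∃ᶠ z in 𝓝[>] x, slope f x z < r) :
    f b - f a ≤ C * (b - a) := by
  have hline : ∀ x ∈ Ico a b,
      HasDerivWithinAt (fun y => f a + C * (y - a)) C (Ici x) x := fun x _ => by
    simpa using (((hasDerivWithinAt_id x (Ici x)).sub_const a).const_mul C).const_add (f a)
  have := image_le_of_liminf_slope_right_le_deriv_boundary hf (by simp) (by fun_prop) hline
    hslope (right_mem_Icc.2 hab)
  linarith

theorem mul_sub_le_sub_of_frequently_lt_slope {f : ℝ → ℝ} {a b C : ℝ} (hab : a ≤ b)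
    (hf : ContinuousOn f (Icc a b))
    (hslope : ∀ x ∈ Ioc a b, ∀ r < C, ∃ᶠ z in 𝓝[<] x, r < slope f x z) :
    C * (b - a) ≤ f b - f a := by
  have hf_neg : ContinuousOn (fun y => f (-y)) (Icc (-b) (-a)) :=
    hf.comp continuousOn_neg fun y hy => ⟨by linarith [hy.2], by linarith [hy.1]⟩
  have := sub_le_mul_sub_of_frequently_slope_lt (C := -C) (neg_le_neg hab) hf_neg
    fun x hx r hr => tendsto_neg_nhdsLT_neg.frequently <|
      (hslope (-x) ⟨by linarith [hx.2], by linarith [hx.1]⟩ (-r) (by linarith)).mono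
        fun w hw => by rw [slope_comp_neg, neg_neg]; linarith
  simp only [neg_neg] at this
  linarith

section UpperSupport

variable {g G : ℝ → ℝ} {G' r x : ℝ} {U : Set ℝ}

theorem eventually_slope_lt_of_upper_support (hU : U ∈ 𝓝[>] x)
    (hG : HasDerivWithinAt G G' U x) (hgG : ∀ z ∈ U, g z ≤ G z) (hx : G x = g x)
    (hr : G' < r) : ∀ᶠ z in 𝓝[>] x, slope g x z < r := by
  have hlim : Tendsto (slope G x) (𝓝[>] x) (𝓝 G') :=
    (hasDerivWithinAt_iff_tendsto_slope' self_notMem_Ioi).1 (hG.mono_of_mem_nhdsWithin hU)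
  filter_upwards [hlim.eventually_lt_const hr, hU, self_mem_nhdsWithin] with z hGz hz hxz
  refine lt_of_le_of_lt ?_ hGz
  rw [slope_def_field, slope_def_field, hx]
  exact div_le_div_of_nonneg_right (sub_le_sub_right (hgG z hz) _) (sub_nonneg.2 hxz.le)

theorem eventually_lt_slope_of_upper_support (hU : U ∈ 𝓝[<] x)
    (hG : HasDerivWithinAt G G' U x) (hgG : ∀ z ∈ U, g z ≤ G z) (hx : G x = g x)
    (hr : r < G') : ∀ᶠ z in 𝓝[<] x, r < slope g x z := by
  have hlim : Tendsto (slope G x) (𝓝[<] x) (𝓝 G') :=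
    (hasDerivWithinAt_iff_tendsto_slope' self_notMem_Iio).1 (hG.mono_of_mem_nhdsWithin hU)
  filter_upwards [hlim.eventually_const_lt hr, hU, self_mem_nhdsWithin] with z hGz hz hzx
  refine hGz.trans_le ?_
  rw [slope_def_field, slope_def_field, hx]
  exact div_le_div_of_nonpos_of_le (sub_nonpos.2 hzx.le) (sub_le_sub_right (hgG z hz) _)

end UpperSupport

theorem lipschitzOnWith_of_upper_support {S : Set ℝ} (hS : S.OrdConnected) {f D : ℝ → ℝ}
    {F : ℝ → ℝ → ℝ} {C : ℝ} (hf : ContinuousOn f S)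
    (hF : ∀ t ∈ S, ∃ U ∈ 𝓝[S] t,
      HasDerivWithinAt (F t) (D t) U t ∧ F t t = f t ∧ ∀ s ∈ U, f s ≤ F t s)
    (hD : ∀ t ∈ S, |D t| ≤ C) :
    LipschitzOnWith C.toNNReal f S := by
  have hright : ∀ a ∈ S, ∀ b ∈ S, a ≤ b → f b - f a ≤ C * (b - a) := by
    intro a ha b hb hab
    refine sub_le_mul_sub_of_frequently_slope_lt hab (hf.mono (hS.out ha hb))
      fun t ht r hr => ?_
    have htS : t ∈ S := hS.out ha hb (Ico_subset_Icc_self ht)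
    obtain ⟨U, hU, hFt, hFt_eq, hfF⟩ := hF t htS
    have hS_gt : S ∈ 𝓝[>] t := mem_of_superset (Icc_mem_nhdsGT_of_mem ht) (hS.out ha hb)
    exact (eventually_slope_lt_of_upper_support (nhdsWithin_le_of_mem hS_gt hU) hFt hfF hFt_eq
      ((le_abs_self _).trans (hD t htS) |>.trans_lt hr)).frequently
  have hleft : ∀ a ∈ S, ∀ b ∈ S, a ≤ b → -C * (b - a) ≤ f b - f a := by
    intro a ha b hb hab
    refine mul_sub_le_sub_of_frequently_lt_slope hab (hf.mono (hS.out ha hb))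
      fun t ht r hr => ?_
    have htS : t ∈ S := hS.out ha hb (Ioc_subset_Icc_self ht)
    obtain ⟨U, hU, hFt, hFt_eq, hfF⟩ := hF t htS
    have hS_lt : S ∈ 𝓝[<] t := mem_of_superset (Icc_mem_nhdsLT_of_mem ht) (hS.out ha hb)
    exact (eventually_lt_slope_of_upper_support (nhdsWithin_le_of_mem hS_lt hU) hFt hfF hFt_eq
      (hr.trans_le (neg_le.1 ((neg_le_abs _).trans (hD t htS))))).frequently
  refine LipschitzOnWith.of_le_add_mul' C fun x hx y hy => ?_
  rw [Real.dist_eq]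
  rcases le_total x y with hxy | hyx
  · have := hleft x hx y hy hxy
    rw [abs_of_nonpos (sub_nonpos.2 hxy)]
    linarith
  · have := hright y hy x hx hyx
    rw [abs_of_nonneg (sub_nonneg.2 hyx)]
    linarith

/-- Wang–Zheng Theorem 1.1 (1): if `f` is continuous on an interval `I` and admits at
each `t ∈ I` a continuously differentiable upper support function `F t` touching `f`
at `t`, and the function `t ↦ (F t)' (t)` is locally bounded on `I`, then `f` is
locally Lipschitz on `I`. -/
theorem continuous_with_upper_support_locallyBounded_deriv_locallyLipschitz
    (I : Set ℝ) (hI : I.OrdConnected) (f : ℝ → ℝ) (hf : ContinuousOn f I)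
    (F F' : ℝ → ℝ → ℝ)
    (hF : ∀ t ∈ I, ∃ U ∈ 𝓝[I] t,
      (∀ s ∈ U, HasDerivWithinAt (F t) (F' t s) U s) ∧
      ContinuousOn (F' t) U ∧ F t t = f t ∧ ∀ s ∈ U, f s ≤ F t s)
    (hbd : ∀ t ∈ I, ∃ U ∈ 𝓝[I] t, ∃ C : ℝ, ∀ s ∈ U, |F' s s| ≤ C) :
    ∀ t ∈ I, ∃ U ∈ 𝓝[I] t, ∃ C : NNReal, LipschitzOnWith C f U := by
  intro t ht
  obtain ⟨U₀, hU₀, C, hC⟩ := hbd t ht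
  obtain ⟨ε, hε, hball⟩ := Metric.mem_nhdsWithin_iff.1 hU₀
  have hV_ord : (Metric.ball t ε ∩ I).OrdConnected := by
    rw [Real.ball_eq_Ioo]
    exact ordConnected_Ioo.inter hI
  refine ⟨_, Metric.mem_nhdsWithin_iff.2 ⟨ε, hε, subset_rfl⟩, C.toNNReal,
    lipschitzOnWith_of_upper_support (F := F) (D := fun s => F' s s) hV_ord
      (hf.mono inter_subset_right) (fun s hs => ?_) (fun s hs => hC s (hball hs))⟩
  obtain ⟨U, hU, hFs, -, hFs_eq, hfF⟩ := hF s hs.2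
  exact ⟨U, nhdsWithin_mono s inter_subset_right hU, hFs s (mem_of_mem_nhdsWithin hs.2 hU),
    hFs_eq, hfF⟩
end

section
/- Let n ≥ 3 be an integer, let k > −n be a real number with n > k + 4, and let ε > 0. For α > 0 define I(α) = ∫_0^ε r^k · (α/(r² + α²))^{n−2} · r^{n−1} dr. Then I(α) = O(α^{k+2}) as α → 0⁺, i.e. there exist constants C > 0 and δ > 0 such that I(α) ≤ C·α^{k+2} for all 0 < α < δ. -/
open MeasureTheory

/-- Lee–Parker Lemma 3.5, case `n > k + 4`:
`∫_0^ε r^k u_α(r)^2 r^(n-1) dr = O(α^(k+2))` as `α → 0⁺`. -/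
theorem bubble_integral_bigO_of_lt
    (n : ℕ) (hn : 3 ≤ n) (k : ℝ) (hk : -(n : ℝ) < k) (hkn : k + 4 < (n : ℝ))
    (ε : ℝ) (hε : 0 < ε) :
    ∃ C > (0 : ℝ), ∃ δ > (0 : ℝ), ∀ α : ℝ, 0 < α → α < δ →
      (∫ r in Set.Ioo (0 : ℝ) ε,
          r ^ k * (α / (r ^ 2 + α ^ 2)) ^ (n - 2) * r ^ (n - 1))
        ≤ C * α ^ (k + 2) := by
  have hkn0 : (0:ℝ) < k + n := by linarith
  have hnk4 : (0:ℝ) < n - k - 4 := by linarith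
  have hmcast : ((n - 2 : ℕ) : ℝ) = (n : ℝ) - 2 := by
    rw [Nat.cast_sub (by omega : 2 ≤ n)]; norm_num
  have hn1cast : ((n - 1 : ℕ) : ℝ) = (n : ℝ) - 1 := by
    rw [Nat.cast_sub (by omega : 1 ≤ n)]; norm_num
  refine ⟨1 / (k + n) + 1 / ((n:ℝ) - k - 4), by positivity, ε, hε, ?_⟩
  intro α hα hαε
  set f : ℝ → ℝ := fun r => r ^ k * (α / (r ^ 2 + α ^ 2)) ^ (n - 2) * r ^ (n - 1)
    with hf
  -- pointwise bound on (0, α)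
  have hbound1 : ∀ r ∈ Set.Ioo (0:ℝ) α, f r ≤ α ^ (-((n:ℝ) - 2)) * r ^ (k + n - 1) := by
    intro r hr
    obtain ⟨hr0, hrα⟩ := hr
    have hbase : α / (r ^ 2 + α ^ 2) ≤ α / α ^ 2 :=
      div_le_div_of_nonneg_left hα.le (by positivity) (by nlinarith)
    have hbasenn : 0 ≤ α / (r ^ 2 + α ^ 2) := by positivity
    have hpow : (α / (r ^ 2 + α ^ 2)) ^ (n - 2) ≤ (α / α ^ 2) ^ (n - 2) :=
      pow_le_pow_left₀ hbasenn hbase _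
    have h1 : f r ≤ r ^ k * (α / α ^ 2) ^ (n - 2) * r ^ (n - 1) := by
      have h0 : (0:ℝ) ≤ r ^ k := by positivity
      have h2 : (0:ℝ) ≤ r ^ (n - 1) := by positivity
      exact mul_le_mul_of_nonneg_right (mul_le_mul_of_nonneg_left hpow h0) h2
    refine h1.trans_eq ?_
    have hαα : α / α ^ 2 = α⁻¹ := by field_simp [sq]
    rw [hαα, inv_pow, ← Real.rpow_natCast α (n - 2), hmcast, ← Real.rpow_neg hα.le,
      ← Real.rpow_natCast r (n - 1), hn1cast,
      show k + (n:ℝ) - 1 = k + ((n:ℝ)-1) by ring, Real.rpow_add hr0]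
    ring
  -- pointwise bound on [α, ε)
  have hbound2 : ∀ r ∈ Set.Ico α ε, f r ≤ α ^ ((n:ℝ) - 2) * r ^ (k + 3 - n) := by
    intro r hr
    obtain ⟨hrα, hrε⟩ := hr
    have hr0 : 0 < r := lt_of_lt_of_le hα hrα
    have hbase : α / (r ^ 2 + α ^ 2) ≤ α / r ^ 2 :=
      div_le_div_of_nonneg_left hα.le (by positivity) (by nlinarith)
    have hbasenn : 0 ≤ α / (r ^ 2 + α ^ 2) := by positivity
    have hpow : (α / (r ^ 2 + α ^ 2)) ^ (n - 2) ≤ (α / r ^ 2) ^ (n - 2) :=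
      pow_le_pow_left₀ hbasenn hbase _
    have h1 : f r ≤ r ^ k * (α / r ^ 2) ^ (n - 2) * r ^ (n - 1) := by
      have h0 : (0:ℝ) ≤ r ^ k := by positivity
      have h2 : (0:ℝ) ≤ r ^ (n - 1) := by positivity
      exact mul_le_mul_of_nonneg_right (mul_le_mul_of_nonneg_left hpow h0) h2
    refine h1.trans_eq ?_
    rw [div_pow, ← pow_mul, ← Real.rpow_natCast α (n - 2), hmcast,
      ← Real.rpow_natCast r (2 * (n - 2)), ← Real.rpow_natCast r (n - 1), hn1cast]
    have h2m : ((2 * (n - 2) : ℕ) : ℝ) = 2 * ((n:ℝ) - 2) := by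
      push_cast [Nat.cast_sub (by omega : 2 ≤ n)]; ring
    rw [h2m, div_eq_mul_inv, ← Real.rpow_neg hr0.le,
      show k + 3 - (n:ℝ) = k + (-(2*((n:ℝ)-2)) + ((n:ℝ)-1)) by ring,
      Real.rpow_add hr0, Real.rpow_add hr0]
    ring
  -- integrability of the majorants
  have hint1 : IntegrableOn (fun r : ℝ => α ^ (-((n:ℝ) - 2)) * r ^ (k + n - 1))
      (Set.Ioo 0 α) := by
    refine Integrable.const_mul ?_ _
    have h : IntervalIntegrable (fun r : ℝ => r ^ (k + n - 1)) volume 0 α :=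
      intervalIntegral.intervalIntegrable_rpow' (by linarith)
    exact ((intervalIntegrable_iff_integrableOn_Ioc_of_le hα.le).mp h).mono_set
      Set.Ioo_subset_Ioc_self
  have hcont : ContinuousOn (fun r : ℝ => α ^ ((n:ℝ) - 2) * r ^ (k + 3 - n))
      (Set.Icc α ε) := by
    refine continuousOn_const.mul ?_
    exact ContinuousOn.rpow_const continuousOn_id
      (fun x hx => Or.inl (ne_of_gt (lt_of_lt_of_le hα hx.1)))
  have hint2 : IntegrableOn (fun r : ℝ => α ^ ((n:ℝ) - 2) * r ^ (k + 3 - n))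
      (Set.Ico α ε) :=
    (hcont.integrableOn_Icc).mono_set Set.Ico_subset_Icc_self
  have hmeas : Measurable f := by fun_prop
  have hfnn : ∀ r : ℝ, 0 < r → 0 ≤ f r := by
    intro r hr
    simp only [hf]
    positivity
  have hfint1 : IntegrableOn f (Set.Ioo 0 α) := by
    refine Integrable.mono' hint1 hmeas.aestronglyMeasurable.restrict ?_
    filter_upwards [ae_restrict_mem measurableSet_Ioo] with r hr
    rw [Real.norm_of_nonneg (hfnn r hr.1)]
    exact hbound1 r hr
  have hfint2 : IntegrableOn f (Set.Ico α ε) := by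
    refine Integrable.mono' hint2 hmeas.aestronglyMeasurable.restrict ?_
    filter_upwards [ae_restrict_mem measurableSet_Ico] with r hr
    rw [Real.norm_of_nonneg (hfnn r (lt_of_lt_of_le hα hr.1))]
    exact hbound2 r hr
  -- split the domain
  have hsplit : Set.Ioo (0:ℝ) ε = Set.Ioo 0 α ∪ Set.Ico α ε :=
    (Set.Ioo_union_Ico_eq_Ioo hα hαε.le).symm
  have hdisj : Disjoint (Set.Ioo (0:ℝ) α) (Set.Ico α ε) := by
    rw [Set.disjoint_left]
    rintro x ⟨_, h⟩ ⟨h', _⟩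
    exact absurd h' (not_le.mpr h)
  -- first piece
  have hIoo : ∫ r in Set.Ioo (0:ℝ) α, r ^ (k + n - 1) = α ^ (k + n) / (k + n) := by
    rw [← integral_Ioc_eq_integral_Ioo, ← intervalIntegral.integral_of_le hα.le,
      integral_rpow (Or.inl (by linarith)),
      Real.zero_rpow (by linarith), show k + (n:ℝ) - 1 + 1 = k + n by ring]
    ring
  have hI1 : ∫ r in Set.Ioo (0:ℝ) α, f r ≤ α ^ (k + 2) / (k + n) := by
    refine (setIntegral_mono_on hfint1 hint1 measurableSet_Ioo hbound1).trans_eq ?_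
    rw [integral_const_mul, hIoo, ← mul_div_assoc, ← Real.rpow_add hα,
      show -((n:ℝ) - 2) + (k + n) = k + 2 by ring]
  -- second piece
  have hεp : (0:ℝ) < ε ^ (k + 4 - n) := Real.rpow_pos_of_pos hε _
  have hIco : ∫ r in Set.Ico α ε, (r:ℝ) ^ (k + 3 - n)
      ≤ α ^ (k + 4 - n) / ((n:ℝ) - k - 4) := by
    rw [integral_Ico_eq_integral_Ioo, ← integral_Ioc_eq_integral_Ioo,
      ← intervalIntegral.integral_of_le hαε.le,
      integral_rpow
        (Or.inr ⟨by intro h; linarith,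
          Set.notMem_uIcc_of_lt hα hε⟩),
      show k + 3 - (n:ℝ) + 1 = -((n:ℝ) - k - 4) by ring, div_neg, neg_div']
    have h1 : (-(ε ^ (-((n:ℝ) - k - 4)) - α ^ (-((n:ℝ) - k - 4))))
        = α ^ (-((n:ℝ) - k - 4)) - ε ^ (-((n:ℝ) - k - 4)) := by ring
    rw [h1, show k + 4 - (n:ℝ) = -((n:ℝ) - k - 4) by ring]
    have hεp' : (0:ℝ) < ε ^ (-((n:ℝ) - k - 4)) := Real.rpow_pos_of_pos hε _
    gcongr
    linarith
  have hI2 : ∫ r in Set.Ico α ε, f r ≤ α ^ (k + 2) / ((n:ℝ) - k - 4) := by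
    refine (setIntegral_mono_on hfint2 hint2 measurableSet_Ico hbound2).trans ?_
    rw [integral_const_mul]
    calc α ^ ((n:ℝ) - 2) * ∫ r in Set.Ico α ε, r ^ (k + 3 - n)
        ≤ α ^ ((n:ℝ) - 2) * (α ^ (k + 4 - n) / ((n:ℝ) - k - 4)) :=
          mul_le_mul_of_nonneg_left hIco (by positivity)
      _ = α ^ (k + 2) / ((n:ℝ) - k - 4) := by
          rw [← mul_div_assoc, ← Real.rpow_add hα,
            show (n:ℝ) - 2 + (k + 4 - n) = k + 2 by ring]
  calc (∫ r in Set.Ioo (0:ℝ) ε, f r)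
      = (∫ r in Set.Ioo (0:ℝ) α, f r) + ∫ r in Set.Ico α ε, f r := by
        rw [hsplit, setIntegral_union hdisj measurableSet_Ico hfint1 hfint2]
    _ ≤ α ^ (k + 2) / (k + n) + α ^ (k + 2) / ((n:ℝ) - k - 4) := add_le_add hI1 hI2
    _ = (1 / (k + n) + 1 / ((n:ℝ) - k - 4)) * α ^ (k + 2) := by ring
end

section
/- Let n ≥ 3 be an integer, let k > −n be a real number with n < k + 4, and let ε > 0. For α > 0 define I(α) = ∫_0^ε r^k · (α/(r² + α²))^{n−2} · r^{n−1} dr. Then I(α) = O(α^{n−2}) as α → 0⁺, i.e. there exist constants C > 0 and δ > 0 such that I(α) ≤ C·α^{n−2} for all 0 < α < δ. -/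
open MeasureTheory

/-- Lee–Parker Lemma 3.5, case `n < k + 4`:
`∫_0^ε r^k u_α(r)^2 r^(n-1) dr = O(α^(n-2))` as `α → 0⁺`. -/
theorem bubble_integral_bigO_of_gt
    (n : ℕ) (hn : 3 ≤ n) (k : ℝ) (hk : -(n : ℝ) < k) (hkn : (n : ℝ) < k + 4)
    (ε : ℝ) (hε : 0 < ε) :
    ∃ C > (0 : ℝ), ∃ δ > (0 : ℝ), ∀ α : ℝ, 0 < α → α < δ →
      (∫ r in Set.Ioo (0 : ℝ) ε,
          r ^ k * (α / (r ^ 2 + α ^ 2)) ^ (n - 2) * r ^ (n - 1))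
        ≤ C * α ^ (n - 2) := by
  set p : ℝ := k + 3 - n with hp_def
  have hp : -1 < p := by simp only [hp_def]; linarith
  have hp1 : 0 < p + 1 := by linarith
  refine ⟨(ε ^ (p + 1)) / (p + 1), by positivity, 1, one_pos, fun α hα _ => ?_⟩
  have hint : IntegrableOn (fun r : ℝ => α ^ (n - 2) * r ^ p) (Set.Ioo 0 ε) := by
    rw [← integrableOn_Ioc_iff_integrableOn_Ioo]
    have := (intervalIntegral.intervalIntegrable_rpow' (a := 0) (b := ε) hp).const_mul
      (α ^ (n - 2))
    rw [intervalIntegrable_iff_integrableOn_Ioc_of_le hε.le] at this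
    exact this
  have hmono : ∫ r in Set.Ioo (0 : ℝ) ε,
      r ^ k * (α / (r ^ 2 + α ^ 2)) ^ (n - 2) * r ^ (n - 1)
      ≤ ∫ r in Set.Ioo (0 : ℝ) ε, α ^ (n - 2) * r ^ p := by
    apply integral_mono_of_nonneg
    · filter_upwards [ae_restrict_mem measurableSet_Ioo] with r hr
      have hr0 : 0 < r := hr.1
      positivity
    · exact hint
    · filter_upwards [ae_restrict_mem measurableSet_Ioo] with r hr
      have hr0 : 0 < r := hr.1
      have h1 : (α / (r ^ 2 + α ^ 2)) ^ (n - 2) ≤ (α / r ^ 2) ^ (n - 2) := by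
        apply pow_le_pow_left₀ (by positivity)
        apply div_le_div_of_nonneg_left hα.le (by positivity)
        nlinarith
      calc r ^ k * (α / (r ^ 2 + α ^ 2)) ^ (n - 2) * r ^ (n - 1)
          ≤ r ^ k * (α / r ^ 2) ^ (n - 2) * r ^ (n - 1) := by
            apply mul_le_mul_of_nonneg_right _ (by positivity)
            exact mul_le_mul_of_nonneg_left h1 (by positivity)
        _ = α ^ (n - 2) * r ^ p := by
            rw [div_pow, hp_def]
            rw [← Real.rpow_natCast r (n - 1), ← Real.rpow_natCast (r ^ 2) (n - 2),
              ← Real.rpow_natCast r 2, ← Real.rpow_mul hr0.le]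
            rw [div_eq_mul_inv, ← Real.rpow_neg hr0.le]
            rw [mul_comm (r ^ k), mul_assoc, mul_assoc, ← Real.rpow_add hr0,
              ← Real.rpow_add hr0]
            congr 1
            rw [Nat.cast_sub (by omega : 2 ≤ n), Nat.cast_sub (by omega : 1 ≤ n)]
            push_cast
            ring_nf
  have hcomp : ∫ r in Set.Ioo (0 : ℝ) ε, α ^ (n - 2) * r ^ p
      = ε ^ (p + 1) / (p + 1) * α ^ (n - 2) := by
    rw [integral_const_mul, ← integral_Ioc_eq_integral_Ioo,
      ← intervalIntegral.integral_of_le hε.le, integral_rpow (Or.inl hp)]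
    rw [Real.zero_rpow (by positivity)]
    ring
  linarith [hmono, hcomp.le, hcomp.ge]
end

section
/- Let m ≥ 3 be an integer and set n = 2m. Then the limit as a → +∞ of ∫_0^a [ (2n² − 9n + 2)σ⁴ − 2(3n + 2)σ² − (3n + 2) ] · σ^{n−1}/(σ² + 1)^n dσ exists and equals c(n) = (m² − 2m − 1)·((m−1)!)² / ((m−1)(m−2)(2m−3)!), and moreover c(n) > 0. -/
/-!
With `t = σ²`, the monomial `σ^(2p+1) / (σ²+1)^(p+r+2)` integrates over `(0, ∞)` to the Beta
value `p! r! / (2 (p+r+1)!)`. The case `p = 0` has an explicit antiderivative, and writing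
`σ² = (σ² + 1) - 1` in the numerator gives the recurrence `I(p+1, r) = I(p, r) - I(p, r+1)`.
Since `n = 2m` is even, the bubble integrand is a combination of three such monomials, and
collecting their Beta values gives `c(n)`.
-/

open MeasureTheory Filter Set Topology
open scoped Nat

noncomputable section

def oddMomentIntegrand (p r : ℕ) (x : ℝ) : ℝ :=
  x ^ (2 * p + 1) / (x ^ 2 + 1) ^ (p + r + 2)

lemma oddMomentIntegrand_succ (p r : ℕ) (x : ℝ) :
    oddMomentIntegrand (p + 1) r x =
      oddMomentIntegrand p r x - oddMomentIntegrand p (r + 1) x := by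
  have hx : x ^ 2 + 1 ≠ 0 := by positivity
  simp only [oddMomentIntegrand, show p + 1 + r + 2 = p + r + 2 + 1 by ring,
    show p + (r + 1) + 2 = p + r + 2 + 1 by ring, pow_succ]
  field_simp
  ring

lemma oddMomentIntegrand_nonneg (p r : ℕ) {x : ℝ} (hx : 0 ≤ x) :
    0 ≤ oddMomentIntegrand p r x := by
  unfold oddMomentIntegrand
  positivity

lemma hasDerivAt_inv_sq_add_one_pow (r : ℕ) (x : ℝ) :
    HasDerivAt (fun x : ℝ => -((x ^ 2 + 1) ^ (r + 1))⁻¹ / (2 * ((r : ℝ) + 1)))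
      (oddMomentIntegrand 0 r x) x := by
  have hx : x ^ 2 + 1 ≠ 0 := by positivity
  have h := ((((hasDerivAt_pow 2 x).add_const 1).fun_pow (r + 1)).fun_inv
    (pow_ne_zero _ hx)).fun_neg.div_const (2 * ((r : ℝ) + 1))
  refine h.congr_deriv ?_
  simp only [oddMomentIntegrand, Nat.add_sub_cancel]
  push_cast
  field_simp
  ring

lemma tendsto_inv_sq_add_one_pow (r : ℕ) :
    Tendsto (fun x : ℝ => -((x ^ 2 + 1) ^ (r + 1))⁻¹ / (2 * ((r : ℝ) + 1))) atTop (𝓝 0) := by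
  have h : Tendsto (fun x : ℝ => (x ^ 2 + 1) ^ (r + 1)) atTop atTop :=
    (tendsto_pow_atTop r.succ_ne_zero).comp
      (tendsto_atTop_add_const_right _ 1 (tendsto_pow_atTop two_ne_zero))
  simpa using h.inv_tendsto_atTop.neg.div_const (2 * ((r : ℝ) + 1))

lemma integrableOn_oddMomentIntegrand (p r : ℕ) :
    IntegrableOn (oddMomentIntegrand p r) (Ioi 0) := by
  induction p generalizing r with
  | zero =>
    exact integrableOn_Ioi_deriv_of_nonneg' (fun x _ => hasDerivAt_inv_sq_add_one_pow r x)
      (fun x hx => oddMomentIntegrand_nonneg 0 r hx.le) (tendsto_inv_sq_add_one_pow r)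
  | succ p ih =>
    simp only [funext (oddMomentIntegrand_succ p r)]
    exact (ih r).sub (ih (r + 1))

lemma integral_oddMomentIntegrand (p r : ℕ) :
    ∫ x in Ioi 0, oddMomentIntegrand p r x = p ! * r ! / (2 * (p + r + 1)! : ℝ) := by
  induction p generalizing r with
  | zero =>
    rw [integral_Ioi_of_hasDerivAt_of_nonneg' (fun x _ => hasDerivAt_inv_sq_add_one_pow r x)
      (fun x hx => oddMomentIntegrand_nonneg 0 r hx.le) (tendsto_inv_sq_add_one_pow r)]
    rw [zero_add, Nat.factorial_succ]
    push_cast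
    field_simp
    norm_num
  | succ p ih =>
    simp only [oddMomentIntegrand_succ p r]
    rw [integral_sub (integrableOn_oddMomentIntegrand p r)
      (integrableOn_oddMomentIntegrand p (r + 1)), ih, ih,
      show p + (r + 1) + 1 = p + r + 1 + 1 by ring, show p + 1 + r + 1 = p + r + 1 + 1 by ring]
    simp only [Nat.factorial_succ]
    push_cast
    field_simp
    ring

lemma tendsto_setIntegral_Ioo_atTop {E : Type*} [NormedAddCommGroup E] [NormedSpace ℝ E]
    {μ : Measure ℝ} [NullSingletonClass μ] {f : ℝ → E} {a : ℝ}
    (hf : IntegrableOn f (Ioi a) μ) :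
    Tendsto (fun b => ∫ x in Ioo a b, f x ∂μ) atTop (𝓝 (∫ x in Ioi a, f x ∂μ)) := by
  refine (intervalIntegral_tendsto_integral_Ioi a hf tendsto_id).congr' ?_
  filter_upwards [eventually_ge_atTop a] with b hb
  rw [id, intervalIntegral.integral_of_le hb, integral_Ioc_eq_integral_Ioo]

def bubbleIntegrand (n : ℕ) (σ : ℝ) : ℝ :=
  ((2 * (n : ℝ) ^ 2 - 9 * (n : ℝ) + 2) * σ ^ 4
      - 2 * (3 * (n : ℝ) + 2) * σ ^ 2 - (3 * (n : ℝ) + 2))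
    * σ ^ (n - 1) / (σ ^ 2 + 1) ^ n

def bubbleConstant (m : ℕ) : ℝ :=
  ((m : ℝ) ^ 2 - 2 * (m : ℝ) - 1) * ((m - 1).factorial : ℝ) ^ 2 /
    (((m : ℝ) - 1) * ((m : ℝ) - 2) * ((2 * m - 3).factorial : ℝ))

lemma bubbleIntegrand_eq {n k : ℕ} (hn : n = 2 * k + 6) (σ : ℝ) :
    bubbleIntegrand n σ =
      (2 * (n : ℝ) ^ 2 - 9 * n + 2) * oddMomentIntegrand (k + 4) k σ
        - 2 * (3 * (n : ℝ) + 2) * oddMomentIntegrand (k + 3) (k + 1) σ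
        - (3 * (n : ℝ) + 2) * oddMomentIntegrand (k + 2) (k + 2) σ := by
  subst hn
  simp only [bubbleIntegrand, oddMomentIntegrand, show 2 * k + 6 - 1 = 2 * k + 5 by omega,
    show k + 4 + k + 2 = 2 * k + 6 by ring, show k + 3 + (k + 1) + 2 = 2 * k + 6 by ring,
    show k + 2 + (k + 2) + 2 = 2 * k + 6 by ring]
  ring

lemma integrableOn_bubbleIntegrand {m : ℕ} (hm : 3 ≤ m) :
    IntegrableOn (bubbleIntegrand (2 * m)) (Ioi 0) := by
  obtain ⟨k, rfl⟩ : ∃ k, m = k + 3 := ⟨m - 3, by omega⟩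
  simp only [funext (bubbleIntegrand_eq (show 2 * (k + 3) = 2 * k + 6 by ring))]
  exact (((integrableOn_oddMomentIntegrand _ _).const_mul _).sub
    ((integrableOn_oddMomentIntegrand _ _).const_mul _)).sub
    ((integrableOn_oddMomentIntegrand _ _).const_mul _)

lemma integral_bubbleIntegrand {m : ℕ} (hm : 3 ≤ m) :
    ∫ σ in Ioi 0, bubbleIntegrand (2 * m) σ = bubbleConstant m := by
  obtain ⟨k, rfl⟩ : ∃ k, m = k + 3 := ⟨m - 3, by omega⟩
  have hJ (p r : ℕ) (c : ℝ) : IntegrableOn (fun σ => c * oddMomentIntegrand p r σ) (Ioi 0) :=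
    (integrableOn_oddMomentIntegrand p r).const_mul c
  simp only [bubbleIntegrand_eq (show 2 * (k + 3) = 2 * k + 6 by ring)]
  rw [integral_sub ((hJ _ _ _).fun_sub (hJ _ _ _)) (hJ _ _ _), integral_sub (hJ _ _ _) (hJ _ _ _),
    integral_const_mul, integral_const_mul, integral_const_mul, integral_oddMomentIntegrand,
    integral_oddMomentIntegrand, integral_oddMomentIntegrand, bubbleConstant,
    show 2 * (k + 3) - 3 = 2 * k + 3 by omega, show k + 3 - 1 = k + 2 by omega]
  simp only [show k + 4 + k + 1 = 2 * k + 3 + 1 + 1 by ring,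
    show k + 3 + (k + 1) + 1 = 2 * k + 3 + 1 + 1 by ring,
    show k + 2 + (k + 2) + 1 = 2 * k + 3 + 1 + 1 by ring, Nat.factorial_succ]
  have h1 : (k : ℝ) + 3 - 1 ≠ 0 := by linarith [k.cast_nonneg (α := ℝ)]
  have h2 : (k : ℝ) + 3 - 2 ≠ 0 := by linarith [k.cast_nonneg (α := ℝ)]
  push_cast
  field_simp
  ring

lemma bubbleConstant_pos {m : ℕ} (hm : 3 ≤ m) : 0 < bubbleConstant m := by
  have h3 : (3 : ℝ) ≤ m := by exact_mod_cast hm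
  unfold bubbleConstant
  apply div_pos
  · exact mul_pos (by nlinarith) (by positivity)
  · exact mul_pos (mul_pos (by linarith) (by linarith)) (by positivity)

end

/-- The improper integral
`∫_0^∞ [(2n²−9n+2)σ⁴ − 2(3n+2)σ² − (3n+2)] σ^(n−1)/(σ²+1)^n dσ`
converges to `c(n) = (m²−2m−1)((m−1)!)² / ((m−1)(m−2)(2m−3)!) > 0` for `n = 2m ≥ 6`. -/
theorem bubble_constant_integral_tendsto
    (m : ℕ) (hm : 3 ≤ m) (n : ℕ) (hn : n = 2 * m) :
    Tendsto
      (fun a : ℝ => ∫ σ in Set.Ioo (0 : ℝ) a,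
        ((2 * (n : ℝ) ^ 2 - 9 * (n : ℝ) + 2) * σ ^ 4
            - 2 * (3 * (n : ℝ) + 2) * σ ^ 2 - (3 * (n : ℝ) + 2))
          * σ ^ (n - 1) / (σ ^ 2 + 1) ^ n)
      atTop
      (nhds (((m : ℝ) ^ 2 - 2 * (m : ℝ) - 1) * ((m - 1).factorial : ℝ) ^ 2 /
        (((m : ℝ) - 1) * ((m : ℝ) - 2) * ((2 * m - 3).factorial : ℝ))))
    ∧ 0 < ((m : ℝ) ^ 2 - 2 * (m : ℝ) - 1) * ((m - 1).factorial : ℝ) ^ 2 /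
        (((m : ℝ) - 1) * ((m : ℝ) - 2) * ((2 * m - 3).factorial : ℝ)) := by
  subst hn
  refine ⟨?_, bubbleConstant_pos hm⟩
  show Tendsto (fun a => ∫ σ in Ioo 0 a, bubbleIntegrand (2 * m) σ) atTop
    (𝓝 (bubbleConstant m))
  rw [← integral_bubbleIntegrand hm]
  exact tendsto_setIntegral_Ioo_atTop (integrableOn_bubbleIntegrand hm)
end

section
/- Let n ≥ 3 be an integer and α > 0, and define u_α : ℝⁿ → ℝ by u_α(x) = (α/(|x|² + α²))^{(n−2)/2}. Then ∫_{ℝⁿ} |∇u_α(x)|² dx = n(n−2) · ∫_{ℝⁿ} u_α(x)^{2n/(n−2)} dx, both integrals being finite. -/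
/-! The bubble is radial, with `∇u_α(x) = -(n-2) u_α(x) x / (|x|² + α²)`; hence
`|∇u_α|² = (n-2)² α^(n-2) |x|² / (|x|² + α²)^n` and `u_α^p = α^n / (|x|² + α²)^n`.
In polar coordinates both integrals become integrals of `r^a / (r² + c)^b` over `(0, ∞)`, and
the identity comes from integrating `d/dr [r^(a+1) / (r² + c)^b]` and splitting
`r^(a+2) = r^a (r² + c) - c r^a`. -/

open MeasureTheory Set Filter Topology

section Radial

variable {c : ℝ}

lemma continuous_pow_div_sq_add_pow (hc : 0 < c) (a b : ℕ) :
    Continuous fun r : ℝ => r ^ a / (r ^ 2 + c) ^ b :=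
  (continuous_pow a).div (by fun_prop) fun r => by positivity

lemma pow_div_sq_add_pow_le_inv_sq (hc : 0 ≤ c) {a b : ℕ} (hab : a + 2 ≤ 2 * b) {r : ℝ}
    (hr : 1 ≤ r) : r ^ a / (r ^ 2 + c) ^ b ≤ (r ^ 2)⁻¹ := by
  rw [div_le_iff₀ (by positivity), inv_mul_eq_div, le_div_iff₀ (by positivity), ← pow_add]
  calc r ^ (a + 2) ≤ r ^ (2 * b) := pow_le_pow_right₀ hr hab
    _ = (r ^ 2) ^ b := pow_mul r 2 b
    _ ≤ (r ^ 2 + c) ^ b := by gcongr; linarith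

lemma integrableOn_Ioi_pow_div_sq_add_pow (hc : 0 < c) {a b : ℕ} (hab : a + 2 ≤ 2 * b) :
    IntegrableOn (fun r : ℝ => r ^ a / (r ^ 2 + c) ^ b) (Ioi 0) := by
  have hcont := continuous_pow_div_sq_add_pow hc a b
  rw [← Ioc_union_Ioi_eq_Ioi zero_le_one]
  refine (hcont.integrableOn_Icc.mono_set Ioc_subset_Icc_self).union ?_
  have hdom : IntegrableOn (fun r : ℝ => r ^ (-2 : ℝ)) (Ioi 1) :=
    integrableOn_Ioi_rpow_of_lt (by norm_num) one_pos
  refine hdom.mono' hcont.aestronglyMeasurable.restrict ?_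
  filter_upwards [ae_restrict_mem measurableSet_Ioi] with r (hr : 1 < r)
  rw [Real.norm_of_nonneg (by positivity), Real.rpow_neg (by positivity)]
  exact_mod_cast pow_div_sq_add_pow_le_inv_sq hc.le hab hr.le

lemma hasDerivAt_pow_succ_div_sq_add_pow (hc : 0 < c) (a b : ℕ) (r : ℝ) :
    HasDerivAt (fun r : ℝ => r ^ (a + 1) / (r ^ 2 + c) ^ b)
      ((a + 1) * (r ^ a / (r ^ 2 + c) ^ b) - 2 * b * (r ^ (a + 2) / (r ^ 2 + c) ^ (b + 1))) r := by
  have hnum : HasDerivAt (fun r : ℝ => r ^ (a + 1)) ((a + 1) * r ^ a) r := by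
    simpa using hasDerivAt_pow (a + 1) r
  have hden : HasDerivAt (fun r : ℝ => (r ^ 2 + c) ^ b)
      (b * (r ^ 2 + c) ^ (b - 1) * (2 * r)) r := by
    simpa using ((hasDerivAt_pow 2 r).add_const c).fun_pow b
  refine (hnum.fun_div hden (by positivity)).congr_deriv ?_
  rcases b with _ | b
  · simp
  · simp only [Nat.add_sub_cancel]
    field_simp
    ring

lemma integral_Ioi_pow_div_sq_add_pow_eq (hc : 0 < c) {a b : ℕ} (hab : a + 2 ≤ 2 * b) :
    ((a : ℝ) + 1) * ∫ r in Ioi (0 : ℝ), r ^ a / (r ^ 2 + c) ^ b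
      = 2 * b * ∫ r in Ioi (0 : ℝ), r ^ (a + 2) / (r ^ 2 + c) ^ (b + 1) := by
  have hA := integrableOn_Ioi_pow_div_sq_add_pow hc hab
  have hJ := integrableOn_Ioi_pow_div_sq_add_pow hc (a := a + 2) (b := b + 1) (by omega)
  have hlim : Tendsto (fun r : ℝ => r ^ (a + 1) / (r ^ 2 + c) ^ b) atTop (𝓝 0) := by
    refine squeeze_zero' ?_ ?_ tendsto_inv_atTop_zero
    · filter_upwards [eventually_ge_atTop 0] with r hr
      positivity
    filter_upwards [eventually_ge_atTop 1] with r hr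
    calc r ^ (a + 1) / (r ^ 2 + c) ^ b = r * (r ^ a / (r ^ 2 + c) ^ b) := by ring
      _ ≤ r * (r ^ 2)⁻¹ := by gcongr; exact pow_div_sq_add_pow_le_inv_sq hc.le hab hr
      _ = r⁻¹ := by field_simp
  have hFTC := integral_Ioi_of_hasDerivAt_of_tendsto'
    (fun r _ => hasDerivAt_pow_succ_div_sq_add_pow hc a b r)
    ((hA.const_mul _).sub (hJ.const_mul _)) hlim
  rw [integral_sub (hA.const_mul _) (hJ.const_mul _), integral_const_mul,
    integral_const_mul] at hFTC
  simp only [zero_pow (Nat.succ_ne_zero a), zero_div, sub_self] at hFTC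
  linarith

lemma integral_Ioi_pow_div_sq_add_pow_succ (hc : 0 < c) {a b : ℕ} (hab : a + 2 ≤ 2 * b) :
    ((a : ℝ) + 1) * c * ∫ r in Ioi (0 : ℝ), r ^ a / (r ^ 2 + c) ^ (b + 1)
      = (2 * b - a - 1) * ∫ r in Ioi (0 : ℝ), r ^ (a + 2) / (r ^ 2 + c) ^ (b + 1) := by
  have hJ := integrableOn_Ioi_pow_div_sq_add_pow hc (a := a + 2) (b := b + 1) (by omega)
  have hB := integrableOn_Ioi_pow_div_sq_add_pow hc (a := a) (b := b + 1) (by omega)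
  have hsplit : ∫ r in Ioi (0 : ℝ), r ^ a / (r ^ 2 + c) ^ b
      = (∫ r in Ioi (0 : ℝ), r ^ (a + 2) / (r ^ 2 + c) ^ (b + 1))
        + c * ∫ r in Ioi (0 : ℝ), r ^ a / (r ^ 2 + c) ^ (b + 1) := by
    rw [← integral_const_mul, ← integral_add hJ (hB.const_mul c)]
    refine setIntegral_congr_fun measurableSet_Ioi fun r _ => ?_
    have : r ^ 2 + c ≠ 0 := by positivity
    field_simp
    ring
  linear_combination integral_Ioi_pow_div_sq_add_pow_eq hc hab - ((a : ℝ) + 1) * hsplit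

end Radial

section Euclidean

variable {E : Type*} [NormedAddCommGroup E] [InnerProductSpace ℝ E] [FiniteDimensional ℝ E]
  [MeasurableSpace E] [BorelSpace E] [Nontrivial E] (μ : Measure E) [μ.IsAddHaarMeasure] {c : ℝ}

open Module

lemma integrable_norm_pow_div_norm_sq_add_pow (hc : 0 < c) {j b : ℕ}
    (h : finrank ℝ E + j + 1 ≤ 2 * b) :
    Integrable (fun x : E => ‖x‖ ^ j / (‖x‖ ^ 2 + c) ^ b) μ := by
  have hd : 0 < finrank ℝ E := finrank_pos
  refine (integrable_fun_norm_addHaar μ (f := fun r => r ^ j / (r ^ 2 + c) ^ b)).2 ?_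
  refine (integrableOn_Ioi_pow_div_sq_add_pow hc (a := finrank ℝ E - 1 + j) (b := b)
    (by omega)).congr_fun (fun r _ => ?_) measurableSet_Ioi
  simp only [smul_eq_mul, pow_add, mul_div_assoc]

lemma integral_norm_sq_div_norm_sq_add_pow (hc : 0 < c) {b : ℕ}
    (h : finrank ℝ E + 1 ≤ 2 * b) :
    (2 * b - finrank ℝ E : ℝ) * ∫ x, ‖x‖ ^ 2 / (‖x‖ ^ 2 + c) ^ (b + 1) ∂μ
      = finrank ℝ E * c * ∫ x, 1 / (‖x‖ ^ 2 + c) ^ (b + 1) ∂μ := by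
  obtain ⟨a, ha⟩ : ∃ a, finrank ℝ E = a + 1 := Nat.exists_eq_add_one.2 finrank_pos
  rw [integral_fun_norm_addHaar μ (fun r => r ^ 2 / (r ^ 2 + c) ^ (b + 1)),
    integral_fun_norm_addHaar μ (fun r => 1 / (r ^ 2 + c) ^ (b + 1)), ha]
  simp only [Nat.add_sub_cancel, smul_eq_mul, nsmul_eq_mul, ← mul_div_assoc, mul_one, ← pow_add]
  push_cast
  linear_combination -((a : ℝ) + 1) * μ.real (Metric.ball 0 1) *
    integral_Ioi_pow_div_sq_add_pow_succ hc (a := a) (b := b) (by omega)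

end Euclidean

section Bubble

variable {E : Type*} [NormedAddCommGroup E] {α : ℝ}

/-- The bubble `u_α`, indexed by `k = n - 2` instead of the dimension `n`. -/
noncomputable def bubble (α : ℝ) (k : ℕ) (x : E) : ℝ :=
  (α / (‖x‖ ^ 2 + α ^ 2)) ^ ((k : ℝ) / 2)

lemma bubble_rpow_critical (hα : 0 ≤ α) {k : ℕ} (hk : k ≠ 0) (x : E) :
    bubble α k x ^ (2 * ((k : ℝ) + 2) / k)
      = α ^ (k + 2) * (1 / (‖x‖ ^ 2 + α ^ 2) ^ (k + 2)) := by
  rw [bubble, ← Real.rpow_mul (by positivity),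
    show (k : ℝ) / 2 * (2 * ((k : ℝ) + 2) / k) = ((k + 2 : ℕ) : ℝ) by push_cast; field_simp,
    Real.rpow_natCast, div_pow]
  ring

variable [InnerProductSpace ℝ E] [CompleteSpace E]

lemma hasGradientAt_rpow_div_norm_sq_add {a c : ℝ} (ha : 0 < a) (hc : 0 < c) (s : ℝ) (x : E) :
    HasGradientAt (fun x => (a / (‖x‖ ^ 2 + c)) ^ s)
      ((-(2 * s) / (‖x‖ ^ 2 + c) * (a / (‖x‖ ^ 2 + c)) ^ s) • x) x := by
  have ht : 0 < ‖x‖ ^ 2 + c := by positivity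
  have hprofile : HasDerivAt (fun t => (a / (t + c)) ^ s)
      (-s / (‖x‖ ^ 2 + c) * (a / (‖x‖ ^ 2 + c)) ^ s) (‖x‖ ^ 2) := by
    have hq := (hasDerivAt_const (‖x‖ ^ 2) a).fun_div ((hasDerivAt_id' _).add_const c) ht.ne'
    refine (hq.rpow_const (Or.inl (div_pos ha ht).ne')).congr_deriv ?_
    rw [Real.rpow_sub_one (div_pos ha ht).ne']
    field_simp
    ring
  rw [hasGradientAt_iff_hasFDerivAt]
  refine (hprofile.comp_hasFDerivAt x (hasStrictFDerivAt_norm_sq x).hasFDerivAt).congr_fderiv ?_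
  ext y
  simp only [smul_apply, coe_innerSL_apply, nsmul_eq_mul, smul_eq_mul, map_smul,
    InnerProductSpace.toDual_apply_apply]
  ring

lemma sq_norm_gradient_bubble (hα : 0 < α) (k : ℕ) (x : E) :
    ‖gradient (bubble α k) x‖ ^ 2
      = k ^ 2 * α ^ k * (‖x‖ ^ 2 / (‖x‖ ^ 2 + α ^ 2) ^ (k + 2)) := by
  have hD : ‖x‖ ^ 2 + α ^ 2 ≠ 0 := by positivity
  unfold bubble
  rw [(hasGradientAt_rpow_div_norm_sq_add hα (by positivity) _ x).gradient, norm_smul,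
    mul_pow, Real.norm_eq_abs, sq_abs, mul_pow, ← Real.rpow_mul_natCast (by positivity),
    show (k : ℝ) / 2 * (2 : ℕ) = k by push_cast; ring, Real.rpow_natCast, div_pow α]
  field_simp
  ring

end Bubble

/-- For the standard bubble `u_α` on `ℝⁿ`, `n ≥ 3`,
`∫ |∇u_α|² = n(n−2) ∫ u_α^(2n/(n−2))`, both integrals being finite. -/
theorem bubble_dirichlet_energy_eq
    (n : ℕ) (hn : 3 ≤ n) (α : ℝ) (hα : 0 < α)
    (u : EuclideanSpace ℝ (Fin n) → ℝ)
    (hu : ∀ x, u x = (α / (‖x‖ ^ 2 + α ^ 2)) ^ (((n : ℝ) - 2) / 2)) :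
    Integrable (fun x => ‖gradient u x‖ ^ 2) ∧
    Integrable (fun x => u x ^ ((2 * (n : ℝ)) / ((n : ℝ) - 2))) ∧
    (∫ x, ‖gradient u x‖ ^ 2)
      = (n : ℝ) * ((n : ℝ) - 2) * ∫ x, u x ^ ((2 * (n : ℝ)) / ((n : ℝ) - 2)) := by
  obtain ⟨k, rfl⟩ : ∃ k, n = k + 2 := ⟨n - 2, by omega⟩
  obtain rfl : u = bubble α k := funext fun x => by
    rw [hu, bubble]
    push_cast
    ring_nf
  have hk : k ≠ 0 := by omega
  simp only [Nat.cast_add, Nat.cast_ofNat, add_sub_cancel_right, sq_norm_gradient_bubble hα,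
    bubble_rpow_critical hα.le hk]
  have hα2 : 0 < α ^ 2 := by positivity
  have hdim : Module.finrank ℝ (EuclideanSpace ℝ (Fin (k + 2))) = k + 2 :=
    finrank_euclideanSpace_fin
  have hint (j : ℕ) (hj : j ≤ 2) := integrable_norm_pow_div_norm_sq_add_pow
    (E := EuclideanSpace ℝ (Fin (k + 2))) volume hα2 (j := j) (b := k + 2) (by omega)
  refine ⟨(hint 2 le_rfl).const_mul _, ?_, ?_⟩
  · simpa using (hint 0 zero_le_two).const_mul (α ^ (k + 2))
  rw [integral_const_mul, integral_const_mul]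
  have hid := integral_norm_sq_div_norm_sq_add_pow
    (E := EuclideanSpace ℝ (Fin (k + 2))) volume hα2 (b := k + 1) (by omega)
  rw [hdim] at hid
  push_cast at hid ⊢
  linear_combination ((k : ℝ) * α ^ k) * hid
end

section
/- Let n ≥ 3 be an integer and α > 0. Then ∫_{ℝⁿ} (α/(|x|² + α²))^n dx = ω_n / 2^n, where ω_n = 2π^{(n+1)/2}/Γ((n+1)/2) is the volume of the unit n-dimensional round sphere; in particular the value of the integral is independent of α. Equivalently, ∫_{ℝⁿ} u_α(x)^{2n/(n−2)} dx = 2^{1−n}·π^{(n+1)/2}/Γ((n+1)/2), where u_α(x) = (α/(|x|² + α²))^{(n−2)/2}. -/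
/-!
Scaling `x ↦ α x` removes `α`. In polar coordinates the integral of `(1 + ‖x‖²)^(-a)` over an
`n`-dimensional space is `n |B₁| ∫₀^∞ rⁿ⁻¹ (1 + r²)^(-a) dr`, a Beta integral, evaluated by writing
`Γ(a) (1 + r²)^(-a) = ∫₀^∞ t^(a-1) e^(-(1 + r²) t) dt` and exchanging the two integrations: the
inner `r`-integral is then a Gaussian moment. For `a = n` this gives `π^(n/2) Γ(n/2) / Γ(n)`,
which Legendre's duplication formula turns into `ω_n / 2ⁿ`.
-/

open MeasureTheory Real Set Module

theorem integral_rpow_mul_exp_neg_mul_sq_Ioi {s b : ℝ} (hs : 0 < s) (hb : 0 < b) :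
    ∫ y in Ioi (0 : ℝ), y ^ (s - 1) * exp (-b * y ^ 2) = b ^ (-(s / 2)) * Gamma (s / 2) / 2 := by
  have h := integral_rpow_mul_exp_neg_mul_rpow two_pos (by linarith : -1 < s - 1) hb
  simp only [rpow_two, sub_add_cancel] at h
  rw [h, neg_div]
  ring

theorem integral_rpow_mul_one_add_sq_rpow_neg {s a : ℝ} (hs : 0 < s) (hsa : s / 2 < a) :
    ∫ y in Ioi (0 : ℝ), y ^ (s - 1) * (1 + y ^ 2) ^ (-a) =
      Gamma (s / 2) * Gamma (a - s / 2) / (2 * Gamma a) := by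
  have ha : 0 < a := by linarith
  set F : ℝ → ℝ → ℝ := fun y t ↦ y ^ (s - 1) * (t ^ (a - 1) * exp (-((1 + y ^ 2) * t)))
  have F_nonneg : ∀ y ∈ Ioi (0 : ℝ), ∀ t ∈ Ioi (0 : ℝ), 0 ≤ F y t := fun y hy t ht ↦ by
    have := hy.out; have := ht.out; positivity
  have integral_dt : ∀ y ∈ Ioi (0 : ℝ), ∫ t in Ioi (0 : ℝ), F y t =
      Gamma a * (y ^ (s - 1) * (1 + y ^ 2) ^ (-a)) := fun y _ ↦ by
    rw [integral_const_mul, integral_rpow_mul_exp_neg_mul_Ioi ha (by positivity),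
      one_div, inv_rpow (by positivity), ← rpow_neg (by positivity)]
    ring
  have integral_dy : ∀ t ∈ Ioi (0 : ℝ), ∫ y in Ioi (0 : ℝ), F y t =
      Gamma (s / 2) / 2 * (exp (-t) * t ^ (a - s / 2 - 1)) := fun t ht ↦ by
    replace ht : 0 < t := ht
    have hsplit : ∀ y, F y t = t ^ (a - 1) * exp (-t) * (y ^ (s - 1) * exp (-t * y ^ 2)) := by
      intro y
      simp only [F]
      rw [show -((1 + y ^ 2) * t) = -t + -t * y ^ 2 by ring, exp_add]
      ring
    simp only [hsplit]
    rw [integral_const_mul, integral_rpow_mul_exp_neg_mul_sq_Ioi hs ht,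
      show a - s / 2 - 1 = (a - 1) + -(s / 2) by ring, rpow_add ht]
    ring
  have hswap : ∫ y in Ioi (0 : ℝ), ∫ t in Ioi (0 : ℝ), F y t =
      ∫ t in Ioi (0 : ℝ), ∫ y in Ioi (0 : ℝ), F y t := by
    refine integral_integral_swap ((integrable_prod_iff' (by fun_prop)).2 ⟨?_, ?_⟩)
    · refine (ae_restrict_iff' measurableSet_Ioi).2 (.of_forall fun t ht ↦ ?_)
      refine .of_integral_ne_zero ?_
      show ∫ y in Ioi (0 : ℝ), F y t ≠ 0
      rw [integral_dy t ht]
      have := ht.out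
      positivity
    · have hnorm : ∀ t ∈ Ioi (0 : ℝ), ∫ y in Ioi (0 : ℝ), ‖F y t‖ =
          Gamma (s / 2) / 2 * (exp (-t) * t ^ (a - s / 2 - 1)) := fun t ht ↦ by
        rw [← integral_dy t ht]
        exact setIntegral_congr_fun measurableSet_Ioi fun y hy ↦
          norm_of_nonneg (F_nonneg y hy t ht)
      exact ((GammaIntegral_convergent (by linarith)).const_mul _).congr
        ((ae_restrict_iff' measurableSet_Ioi).2 (.of_forall fun t ht ↦ (hnorm t ht).symm))
  have hrhs : ∫ t in Ioi (0 : ℝ), ∫ y in Ioi (0 : ℝ), F y t =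
      Gamma (s / 2) / 2 * Gamma (a - s / 2) := by
    rw [setIntegral_congr_fun measurableSet_Ioi integral_dy, integral_const_mul,
      ← Gamma_eq_integral (by linarith : 0 < a - s / 2)]
  rw [setIntegral_congr_fun measurableSet_Ioi integral_dt, integral_const_mul, hrhs] at hswap
  rw [eq_div_iff (by have := Gamma_pos_of_pos ha; positivity)]
  linear_combination 2 * hswap

section
variable {E : Type*} [NormedAddCommGroup E] [InnerProductSpace ℝ E] [FiniteDimensional ℝ E]
  [MeasurableSpace E] [BorelSpace E] [Nontrivial E]

theorem integral_one_add_norm_sq_rpow_neg {a : ℝ} (ha : finrank ℝ E / 2 < a) :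
    ∫ x : E, (1 + ‖x‖ ^ 2) ^ (-a) =
      π ^ (finrank ℝ E / 2 : ℝ) * Gamma (a - finrank ℝ E / 2) / Gamma a := by
  have hd : 0 < (finrank ℝ E : ℝ) := Nat.cast_pos.2 finrank_pos
  have hball : volume.real (Metric.ball (0 : E) 1) =
      π ^ (finrank ℝ E / 2 : ℝ) / Gamma (finrank ℝ E / 2 + 1) := by
    rw [measureReal_def, InnerProductSpace.volume_ball, ENNReal.ofReal_one, one_pow, one_mul,
      ENNReal.toReal_ofReal (by positivity), sqrt_eq_rpow, ← rpow_natCast, ← rpow_mul pi_pos.le,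
      one_div_mul_eq_div]
  have hradial : ∫ y in Ioi (0 : ℝ), y ^ (finrank ℝ E - 1) • (1 + y ^ 2) ^ (-a) =
      ∫ y in Ioi (0 : ℝ), y ^ ((finrank ℝ E : ℝ) - 1) * (1 + y ^ 2) ^ (-a) :=
    setIntegral_congr_fun measurableSet_Ioi fun y _ ↦ by
      rw [smul_eq_mul, ← rpow_natCast, Nat.cast_sub finrank_pos, Nat.cast_one]
  rw [integral_fun_norm_addHaar volume (fun r ↦ (1 + r ^ 2) ^ (-a)), hball, hradial,
    integral_rpow_mul_one_add_sq_rpow_neg hd ha, nsmul_eq_mul, smul_eq_mul,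
    Gamma_add_one (by positivity)]
  have := Gamma_pos_of_pos (half_pos hd)
  have := Gamma_pos_of_pos ((half_pos hd).trans ha)
  field_simp

end

theorem integral_div_norm_sq_add_sq_pow_finrank {E : Type*} [NormedAddCommGroup E]
    [NormedSpace ℝ E] [FiniteDimensional ℝ E] [MeasurableSpace E] [BorelSpace E]
    (μ : Measure E) [μ.IsAddHaarMeasure] {α : ℝ} (hα : 0 < α) :
    ∫ x, (α / (‖x‖ ^ 2 + α ^ 2)) ^ finrank ℝ E ∂μ =
      ∫ x, (1 + ‖x‖ ^ 2) ^ (-(finrank ℝ E : ℝ)) ∂μ := by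
  have hscale : ∀ x : E, (α / (‖x‖ ^ 2 + α ^ 2)) ^ finrank ℝ E =
      (α ^ finrank ℝ E)⁻¹ * (1 + ‖α⁻¹ • x‖ ^ 2) ^ (-(finrank ℝ E : ℝ)) := fun x ↦ by
    have hbase : α / (‖x‖ ^ 2 + α ^ 2) = α⁻¹ * (1 + ‖α⁻¹ • x‖ ^ 2)⁻¹ := by
      rw [norm_smul, norm_inv, Real.norm_of_nonneg hα.le]
      field_simp
      ring
    rw [hbase, mul_pow, inv_pow, rpow_neg (by positivity), rpow_natCast, inv_pow]
  simp only [hscale]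
  rw [integral_const_mul, Measure.integral_comp_inv_smul μ (fun x ↦ (1 + ‖x‖ ^ 2) ^ _) α,
    abs_of_pos (by positivity), smul_eq_mul, inv_mul_cancel_left₀ (by positivity)]

theorem pi_rpow_half_mul_Gamma_half_div_Gamma {s : ℝ} (hs : 0 < s) :
    π ^ (s / 2) * Gamma (s / 2) / Gamma s =
      2 * π ^ ((s + 1) / 2) / Gamma ((s + 1) / 2) / 2 ^ s := by
  have hdup := Gamma_mul_Gamma_add_half (s / 2)
  rw [mul_div_cancel₀ s two_ne_zero, show s / 2 + 1 / 2 = (s + 1) / 2 by ring,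
    rpow_sub two_pos, rpow_one] at hdup
  have hpi : π ^ ((s + 1) / 2) = π ^ (s / 2) * √π := by
    rw [sqrt_eq_rpow, ← rpow_add pi_pos, add_div]
  have := Gamma_pos_of_pos hs
  have := Gamma_pos_of_pos (by positivity : 0 < (s + 1) / 2)
  rw [hpi, div_div, div_eq_div_iff (by positivity) (by positivity)]
  field_simp at hdup
  linear_combination π ^ (s / 2) * hdup

/-- `∫_{ℝⁿ} (α/(|x|²+α²))ⁿ dx = ω_n / 2ⁿ`, where
`ω_n = 2π^((n+1)/2)/Γ((n+1)/2)` is the volume of the round unit `n`-sphere;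
in particular the integral is independent of `α`. -/
theorem bubble_critical_integral_eq
    (n : ℕ) (hn : 3 ≤ n) (α : ℝ) (hα : 0 < α) :
    (∫ x : EuclideanSpace ℝ (Fin n), (α / (‖x‖ ^ 2 + α ^ 2)) ^ n)
      = (2 * Real.pi ^ (((n : ℝ) + 1) / 2) / Real.Gamma (((n : ℝ) + 1) / 2)) / 2 ^ n := by
  have hn₀ : 0 < n := by omega
  have : Nonempty (Fin n) := ⟨⟨0, hn₀⟩⟩
  have hscale := integral_div_norm_sq_add_sq_pow_finrank
    (volume : Measure (EuclideanSpace ℝ (Fin n))) hα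
  rw [finrank_euclideanSpace_fin] at hscale
  rw [hscale, integral_one_add_norm_sq_rpow_neg (by simp [hn₀]), finrank_euclideanSpace_fin,
    show (n : ℝ) - n / 2 = n / 2 by ring, pi_rpow_half_mul_Gamma_half_div_Gamma (by positivity),
    rpow_natCast]
end

section
/- Let V be a finite-dimensional real inner product space, let J : V → V be a linear map satisfying J² = −id and ⟨Jx, Jy⟩ = ⟨x, y⟩ for all x, y ∈ V, and let K : V → V be a linear map satisfying KJ = −JK and ⟨Kx, y⟩ = −⟨x, Ky⟩ for all x, y ∈ V. For t ∈ ℝ define J(t) = J ∘ exp(−t·J∘K), where exp denotes the exponential of a linear endomorphism. Then for every t ∈ ℝ: (i) J(t)² = −id; (ii) ⟨J(t)x, J(t)y⟩ = ⟨x, y⟩ for all x, y ∈ V; (iii) J(0) = J; and (iv) the derivative of t ↦ J(t) at t = 0 equals K. -/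
open scoped RealInnerProductSpace

/-!
Put `A = J K`. Since `K` anticommutes with `J`, so does `A`, hence `J exp(-tA) = exp(tA) J` and
`J(t)² = J² exp(tA) exp(-tA) = -1`. Since `J` is orthogonal with `J² = -1`, its adjoint is `-J`,
which makes `A` skew-adjoint; so `exp(-tA)` is orthogonal and so is `J(t)`. Finally
`J'(0) = J (-A) = -J² K = K`.
-/

section Ring

variable {R : Type*} [Ring R] {J K : R}

lemma semiconjBy_mul_of_anticommute (hJ : J * J = -1) (hKJ : K * J = -(J * K)) :
    SemiconjBy J (J * K) (-(J * K)) :=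
  calc J * (J * K) = -K := by rw [← mul_assoc, hJ, neg_one_mul]
    _ = -(J * K) * J := by
      rw [neg_mul, mul_assoc, hKJ, mul_neg, ← mul_assoc, hJ, neg_one_mul, neg_neg]

lemma star_eq_neg_of_mul_self_eq_neg_one [StarRing R] (hJ : J * J = -1) (hJu : star J * J = 1) :
    star J = -J :=
  calc star J = star J * J * -J := by rw [mul_assoc, mul_neg, hJ, neg_neg, mul_one]
    _ = -J := by rw [hJu, one_mul]

end Ring

namespace NormedSpace

variable {𝔸 : Type*} [NormedRing 𝔸] [NormedAlgebra ℝ 𝔸] {J K : 𝔸}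

noncomputable def complexStructureFamily (J K : 𝔸) (t : ℝ) : 𝔸 :=
  J * exp (-(t • (J * K)))

@[simp]
lemma complexStructureFamily_zero (J K : 𝔸) : complexStructureFamily J K 0 = J := by
  simp [complexStructureFamily]

variable [CompleteSpace 𝔸]

lemma complexStructureFamily_mul_self (hJ : J * J = -1) (hKJ : K * J = -(J * K)) (t : ℝ) :
    complexStructureFamily J K t * complexStructureFamily J K t = -1 := by
  -- the algebraic lemmas on `exp` are stated over `ℚ`
  let +nondep : NormedAlgebra ℚ 𝔸 := .restrictScalars ℚ ℝ 𝔸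
  have hconj : SemiconjBy J (exp (-(t • (J * K)))) (exp (t • (J * K))) := by
    simpa [smul_neg] using ((semiconjBy_mul_of_anticommute hJ hKJ).smul_right (-t)).exp_right
  have hinv : exp (t • (J * K)) * exp (-(t • (J * K))) = 1 := by
    rw [← exp_add_of_commute (Commute.refl _).neg_right, add_neg_cancel, exp_zero]
  calc complexStructureFamily J K t * complexStructureFamily J K t
      = exp (t • (J * K)) * J * (J * exp (-(t • (J * K)))) := by
        rw [complexStructureFamily, hconj.eq]
    _ = exp (t • (J * K)) * (J * J) * exp (-(t • (J * K))) := by simp only [mul_assoc]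
    _ = -1 := by rw [hJ, mul_neg_one, neg_mul, hinv]

lemma complexStructureFamily_mem_unitary [StarRing 𝔸] [ContinuousStar 𝔸] [StarModule ℝ 𝔸]
    (hJ : J * J = -1) (hJu : star J * J = 1) (hKJ : K * J = -(J * K)) (hK : star K = -K)
    (t : ℝ) : complexStructureFamily J K t ∈ unitary 𝔸 := by
  let +nondep : NormedAlgebra ℚ 𝔸 := .restrictScalars ℚ ℝ 𝔸
  have hJstar := star_eq_neg_of_mul_self_eq_neg_one hJ hJu
  have hJunitary : J ∈ unitary 𝔸 :=
    Unitary.mem_iff.mpr ⟨hJu, by rw [hJstar, mul_neg, hJ, neg_neg]⟩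
  have hskew : J * K ∈ skewAdjoint 𝔸 := by
    rw [skewAdjoint.mem_iff, star_mul, hK, hJstar, neg_mul_neg, hKJ]
  exact Submonoid.mul_mem _ hJunitary <|
    exp_mem_unitary_of_mem_skewAdjoint (neg_mem (skewAdjoint.smul_mem t hskew))

lemma hasDerivAt_complexStructureFamily (hJ : J * J = -1) :
    HasDerivAt (complexStructureFamily J K) K 0 := by
  have hfamily : complexStructureFamily J K = fun t ↦ J * exp (t • -(J * K)) :=
    funext fun t ↦ by rw [complexStructureFamily, smul_neg]
  have hexp := hasDerivAt_exp_smul_const (𝕂 := ℝ) (-(J * K)) 0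
  rw [zero_smul, exp_zero, one_mul] at hexp
  rw [hfamily]
  convert hexp.const_mul J using 1
  rw [mul_neg, ← mul_assoc, hJ]
  simp

end NormedSpace

open NormedSpace

/-- If `J` is a compatible complex structure on a finite-dimensional real inner product
space `V` and `K` anticommutes with `J` and is skew-adjoint, then
`J(t) = J ∘ exp(−t J K)` is a one-parameter family of compatible complex structures
with `J(0) = J` and `J'(0) = K`. -/
theorem exp_family_of_compatible_complex_structures
    (V : Type*) [NormedAddCommGroup V] [InnerProductSpace ℝ V] [FiniteDimensional ℝ V]
    (J K : V →L[ℝ] V)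
    (hJ2 : ∀ x, J (J x) = -x)
    (hJi : ∀ x y, ⟪J x, J y⟫ = ⟪x, y⟫)
    (hKJ : ∀ x, K (J x) = -J (K x))
    (hKs : ∀ x y, ⟪K x, y⟫ = -⟪x, K y⟫)
    (Jt : ℝ → V →L[ℝ] V)
    (hJt : ∀ t, Jt t = J ∘L NormedSpace.exp (-(t • (J ∘L K)))) :
    (∀ t x, Jt t (Jt t x) = -x) ∧
    (∀ t x y, ⟪Jt t x, Jt t y⟫ = ⟪x, y⟫) ∧
    Jt 0 = J ∧
    HasDerivAt Jt K 0 := by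
  have := FiniteDimensional.complete ℝ V
  obtain rfl : Jt = complexStructureFamily J K := funext hJt
  have hJ : J * J = -1 := ContinuousLinearMap.ext hJ2
  have hJu : star J * J = 1 := (J.inner_map_map_iff_adjoint_comp_self).mp hJi
  have hKJ' : K * J = -(J * K) := ContinuousLinearMap.ext hKJ
  have hK : star K = -K := .symm <|
    ((-K).eq_adjoint_iff K).mpr fun x y ↦ by rw [neg_apply, inner_neg_left, hKs, neg_neg]
  exact ⟨fun t x ↦ congr($(complexStructureFamily_mul_self hJ hKJ' t) x),
    fun t ↦ ContinuousLinearMap.inner_map_map_of_mem_unitary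
      (complexStructureFamily_mem_unitary hJ hJu hKJ' hK t),
    complexStructureFamily_zero J K, hasDerivAt_complexStructureFamily hJ⟩
end
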